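/- Let c ∈ ℂ and R = ℂ[t, t^{-1}, u | u² = t⁴ − 2ct² + 1]. In Ω¹_R/dR the following identities hold: (class of t u dt) = (1/2)(ω_{−3} + c ω_{−1}); (class of t² u dt) = (1/5)ω_{−2} + (4c/5)ω_{−4}; (class of t³ u dt) = (c/2)(ω_{−3} + c ω_{−1}); (class of t⁴ u dt) = ((32c² − 5)/35)ω_{−4} + (8c/35)ω_{−2}; and (class of t⁵ u dt) = ((5c² − 1)/8)(ω_{−3} + c ω_{−1}). -/

import Mathlib

/-!
From `u² = t⁴ - 2ct² + 1` one gets `u du = (2t³ - 2ct) dt`, so the exact differential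
`d(tᵐu³) = m tᵐ⁻¹u³ dt + 3tᵐu² du` equals `((m+6) tᵐ⁺³ - 2c(m+3) tᵐ⁺¹ + m tᵐ⁻¹) u dt`.
In `Ω¹_R/dR` this is the recurrence `(m+6) ω_{m+3} - 2c(m+3) ω_{m+1} + m ω_{m-1} = 0`.
At `m = -3` it gives `ω₀ = ω₋₄`, and at `m = -2, …, 2` it expresses `ω₁, …, ω₅` in turn
through `ω₋₁, …, ω₋₄`.
-/

noncomputable section
open Polynomial LaurentPolynomial

/-- The ring `R = ℂ[t,t⁻¹][u]/(u² − (t⁴ − 2ct² + 1))`, realized by adjoining a root `u`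
of `X² − (t⁴ − 2ct² + 1)` to the ring of Laurent polynomials `ℂ[t,t⁻¹]`. -/
abbrev DJKM (c : ℂ) : Type :=
  AdjoinRoot ((X : Polynomial (LaurentPolynomial ℂ)) ^ 2 -
    Polynomial.C (T 4 - 2 * LaurentPolynomial.C c * T 2 + 1))

/-- The element `t^i` of `R`, for `i : ℤ`. -/
def tp (c : ℂ) (i : ℤ) : DJKM c := AdjoinRoot.of _ (T i)

/-- The element `u` of `R`. -/
def uu (c : ℂ) : DJKM c := AdjoinRoot.root _

/-- The subspace `dR ⊆ Ω¹_R` of exact differentials. -/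
def dR (c : ℂ) : Submodule ℂ (KaehlerDifferential ℂ (DJKM c)) :=
  LinearMap.range (KaehlerDifferential.D ℂ (DJKM c)).toLinearMap

/-- The class of `f·dg` in `Ω¹_R/dR`. -/
def cls (c : ℂ) (f g : DJKM c) : KaehlerDifferential ℂ (DJKM c) ⧸ dR c :=
  Submodule.Quotient.mk (f • KaehlerDifferential.D ℂ (DJKM c) g)

/-- `ω_k` : the class of `t^k·u·dt` in `Ω¹_R/dR`. -/
def w (c : ℂ) (k : ℤ) : KaehlerDifferential ℂ (DJKM c) ⧸ dR c :=
  cls c (tp c k * uu c) (tp c 1)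

/-- `ω₀` : the class of `t⁻¹·dt` in `Ω¹_R/dR`. -/
def w0 (c : ℂ) : KaehlerDifferential ℂ (DJKM c) ⧸ dR c :=
  cls c (tp c (-1)) (tp c 1)

theorem Derivation.leibniz_zpow_units {R A M : Type*} [CommRing R] [CommRing A] [Algebra R A]
    [AddCommGroup M] [Module A M] [Module R M] (D : Derivation R A M) (a : Aˣ) (n : ℤ) :
    D ↑(a ^ n) = n • (↑(a ^ (n - 1)) : A) • D a := by
  induction n using Int.induction_on with
  | zero => simp
  | succ k ih =>
    have h : (a : A) * ↑(a ^ ((k : ℤ) - 1)) = ↑(a ^ (k : ℤ)) := by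
      rw [← Units.val_mul, ← zpow_one_add, add_sub_cancel]
    rw [zpow_add_one, Units.val_mul, D.leibniz, ih, add_sub_cancel_right]
    match_scalars
    linear_combination (k : A) * h
  | pred k ih =>
    have hinv : D ↑a⁻¹ = -(↑(a ^ (-2 : ℤ)) : A) • D a := by
      rw [D.leibniz_of_mul_eq_one (Units.inv_mul a), ← Units.val_pow_eq_pow_val, inv_pow,
        zpow_neg, zpow_ofNat]
    have h1 : (↑(a ^ (-(k : ℤ))) : A) * ↑(a ^ (-2 : ℤ)) = ↑(a ^ (-(k : ℤ) - 1 - 1)) := by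
      rw [← Units.val_mul, ← zpow_add]; ring_nf
    have h2 : (↑a⁻¹ : A) * ↑(a ^ (-(k : ℤ) - 1)) = ↑(a ^ (-(k : ℤ) - 1 - 1)) := by
      rw [← Units.val_mul, ← zpow_neg_one, ← zpow_add]; ring_nf
    rw [zpow_sub_one, Units.val_mul, D.leibniz, ih, hinv]
    match_scalars
    linear_combination -h1 - (k : A) * h2

section

variable (c : ℂ)

local notation "𝔡" => KaehlerDifferential.D ℂ (DJKM c)

lemma tp_add (i j : ℤ) : tp c (i + j) = tp c i * tp c j := by
  rw [tp, T_add, map_mul]; rfl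

lemma tp_zero : tp c 0 = 1 := by
  rw [tp, T_zero, map_one]

lemma tp_natCast (n : ℕ) : tp c n = tp c 1 ^ n := by
  rw [tp, tp, ← map_pow, T_pow, mul_one]

def tUnit : (DJKM c)ˣ where
  val := tp c 1
  inv := tp c (-1)
  val_inv := by rw [← tp_add, add_neg_cancel, tp_zero]
  inv_val := by rw [← tp_add, neg_add_cancel, tp_zero]

lemma val_tUnit_zpow (i : ℤ) : ↑(tUnit c ^ i) = tp c i := by
  induction i using Int.induction_on with
  | zero => rw [zpow_zero, Units.val_one, tp_zero]
  | succ k ih => rw [zpow_add_one, Units.val_mul, ih, tp_add]; rfl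
  | pred k ih => rw [zpow_sub_one, Units.val_mul, ih]; exact (tp_add c _ _).symm

lemma D_tp (i : ℤ) : 𝔡 (tp c i) = i • tp c (i - 1) • 𝔡 (tp c 1) := by
  have h := (𝔡).leibniz_zpow_units (tUnit c) i
  rw [val_tUnit_zpow, val_tUnit_zpow] at h
  exact h

lemma uu_sq : uu c ^ 2 = tp c 1 ^ 4 - (2 * c) • tp c 1 ^ 2 + 1 := by
  have h := AdjoinRoot.eval₂_root ((X : Polynomial (LaurentPolynomial ℂ)) ^ 2 -
    Polynomial.C (T 4 - 2 * LaurentPolynomial.C c * T 2 + 1))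
  rw [eval₂_sub, eval₂_pow, eval₂_X, Polynomial.eval₂_C, sub_eq_zero] at h
  rw [uu, h, ← tp_natCast, ← tp_natCast, tp, tp]
  simp only [map_add, map_sub, map_mul, map_one, map_ofNat, Nat.cast_ofNat, Algebra.smul_def]
  rfl

lemma uu_smul_D_uu :
    uu c • 𝔡 (uu c) = (2 • tp c 1 ^ 3 - (2 * c) • tp c 1) • 𝔡 (tp c 1) := by
  have h := congrArg 𝔡 (uu_sq c)
  simp only [Derivation.leibniz_pow, Derivation.map_add, Derivation.map_sub,
    Derivation.map_smul, Derivation.map_one_eq_zero, add_zero] at h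
  norm_num at h
  apply smul_right_injective _ (two_ne_zero' ℂ)
  linear_combination (norm := skip) h
  match_scalars <;> simp only [Algebra.smul_def, map_mul, map_ofNat] <;> ring

lemma D_tp_mul_uu_pow_three (m : ℤ) :
    𝔡 (tp c m * uu c ^ 3) =
      ((m : ℂ) + 6) • (tp c (m + 3) * uu c) • 𝔡 (tp c 1)
        - (2 * c * ((m : ℂ) + 3)) • (tp c (m + 1) * uu c) • 𝔡 (tp c 1)
        + (m : ℂ) • (tp c (m - 1) * uu c) • 𝔡 (tp c 1) := by
  have e4 : tp c (m + 3) = tp c (m - 1) * tp c 1 ^ 4 := by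
    rw [← tp_natCast c 4, ← tp_add]; congr 1; omega
  have e2 : tp c (m + 1) = tp c (m - 1) * tp c 1 ^ 2 := by
    rw [← tp_natCast c 2, ← tp_add]; congr 1; omega
  have e1 : tp c m = tp c (m - 1) * tp c 1 := by
    rw [← tp_add, sub_add_cancel]
  have hu3 : uu c ^ 3 = (tp c 1 ^ 4 - (2 * c) • tp c 1 ^ 2 + 1) * uu c := by
    rw [pow_succ, uu_sq]
  rw [Derivation.leibniz, Derivation.leibniz_pow, D_tp, show 3 - 1 = 2 from rfl, sq (uu c),
    mul_smul, uu_smul_D_uu, hu3, e4, e2, e1]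
  match_scalars
  simp only [Algebra.smul_def, map_mul, map_ofNat, map_intCast]
  ring

lemma w_recurrence (m : ℤ) :
    ((m : ℂ) + 6) • w c (m + 3) - (2 * c * ((m : ℂ) + 3)) • w c (m + 1)
      + (m : ℂ) • w c (m - 1) = 0 := by
  simp only [w, cls, ← Submodule.Quotient.mk_smul, ← Submodule.Quotient.mk_sub,
    ← Submodule.Quotient.mk_add, Submodule.Quotient.mk_eq_zero]
  exact ⟨tp c m * uu c ^ 3, D_tp_mul_uu_pow_three c m⟩

end

/-- Explicit expressions for the classes of `t^k u dt`, `k = 1,…,5`, in terms of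
`ω₋₁, ω₋₂, ω₋₃, ω₋₄`. -/
theorem stmt7 (c : ℂ) :
    w c 1 = (1 / 2 : ℂ) • (w c (-3) + c • w c (-1)) ∧
    w c 2 = (1 / 5 : ℂ) • w c (-2) + (4 * c / 5) • w c (-4) ∧
    w c 3 = (c / 2) • (w c (-3) + c • w c (-1)) ∧
    w c 4 = ((32 * c ^ 2 - 5) / 35) • w c (-4) + (8 * c / 35) • w c (-2) ∧
    w c 5 = ((5 * c ^ 2 - 1) / 8) • (w c (-3) + c • w c (-1)) := by
  have r_neg3 := w_recurrence c (-3)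
  have r_neg2 := w_recurrence c (-2)
  have r_neg1 := w_recurrence c (-1)
  have r0 := w_recurrence c 0
  have r1 := w_recurrence c 1
  have r2 := w_recurrence c 2
  norm_num at r_neg3 r_neg2 r_neg1 r0 r1 r2
  have h₀ : w c 0 = w c (-4) := by linear_combination (norm := module) (1 / 3 : ℂ) • r_neg3
  have h₁ : w c 1 = (1 / 2 : ℂ) • (w c (-3) + c • w c (-1)) := by
    linear_combination (norm := module) (1 / 4 : ℂ) • r_neg2
  have h₂ : w c 2 = (1 / 5 : ℂ) • w c (-2) + (4 * c / 5) • w c (-4) := by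
    linear_combination (norm := module) (1 / 5 : ℂ) • r_neg1 + (4 * c / 5) • h₀
  have h₃ : w c 3 = (c / 2) • (w c (-3) + c • w c (-1)) := by
    linear_combination (norm := module) (1 / 6 : ℂ) • r0 + c • h₁
  have h₄ : w c 4 = ((32 * c ^ 2 - 5) / 35) • w c (-4) + (8 * c / 35) • w c (-2) := by
    linear_combination (norm := module) (1 / 7 : ℂ) • r1 + (8 * c / 7) • h₂ - (1 / 7 : ℂ) • h₀
  have h₅ : w c 5 = ((5 * c ^ 2 - 1) / 8) • (w c (-3) + c • w c (-1)) := by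
    linear_combination (norm := module) (1 / 8 : ℂ) • r2 + (5 * c / 4) • h₃ - (1 / 4 : ℂ) • h₁
  exact ⟨h₁, h₂, h₃, h₄, h₅⟩
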